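/- Let d ≥ 1 and h ≥ 1 be integers, r = (r_1,…,r_d) ∈ (ℕ⁺)^d, N a positive integer, and let 0 ≤ η ≤ h−1, 0 ≤ ℓ ≤ η and 1 ≤ λ ≤ h−η be integers. If k > −τ(r,𝔇) + (h−η−ℓ)/2, then the quantity I_{1,2,λ} := ∑_{f_1≥1} ⋯ ∑_{f_λ≥1} ∫_{(1/N)} |e^{Nz}| |z|^{−k−1−τ(r,𝔇)−(h−η+ℓ)/2} e^{−π² Re(1/z)(f_1²+⋯+f_λ²)} |ω₂(π²/z)|^{h−η−λ} |dz| is finite. In particular, for k > −τ(r,𝔇) + h/2 all such quantities are finite, justifying term-by-term integration of the expansion of ω₂(z)^h over the line Re z = 1/N against e^{Nz} z^{−k−1−τ(r,𝔇)−(h−η+ℓ)/2}. -/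

import Mathlib

/-! On the line `z = 1/N + iy` we have `|e^{Nz}| = e`, and with `c = π² Re(1/z) = π² Re z / |z|²`
the integral test against the half Gaussian gives
`∑_{f ≥ 1} e^{-c f²} ≤ √(π/c)/2 = |z| / (2√(π Re z))`.
This bounds both `|ω₂(π²/z)|` and, after summing over `f` before integrating, each of the `λ`
Gaussian factors, so the summed integrand is `O(|z|^{-k-1-τ-(h-η+ℓ)/2 + (h-η)})`. The exponent is
`< -1` exactly when `k > -τ + (h-η-ℓ)/2`, and then the integral over the line converges. -/

open Complex BigOperators MeasureTheory ENNReal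

noncomputable section

/-- `ω₂(z) := ∑_{m ≥ 1} e^{-m² z}`. -/
def omega2 (z : ℂ) : ℂ := ∑' m : ℕ+, Complex.exp (-((m : ℕ) : ℂ) ^ 2 * z)

lemma tsum_lintegral_le_lintegral_tsum {α β : Type*} [MeasurableSpace α] {μ : Measure α}
    (f : β → α → ℝ≥0∞) : ∑' i, ∫⁻ a, f i a ∂μ ≤ ∫⁻ a, ∑' i, f i a ∂μ := by
  classical
  rw [ENNReal.tsum_eq_iSup_sum]
  refine iSup_le fun s => ?_
  calc ∑ i ∈ s, ∫⁻ a, f i a ∂μ ≤ ∫⁻ a, ∑ i ∈ s, f i a ∂μ := by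
        induction s using Finset.induction_on with
        | empty => simp
        | insert i s hi ih =>
          simp only [Finset.sum_insert hi]
          exact (add_le_add_right ih _).trans (le_lintegral_add _ _)
    _ ≤ ∫⁻ a, ∑' i, f i a ∂μ := lintegral_mono fun a => ENNReal.sum_le_tsum s

lemma ENNReal.tsum_pi_prod {α : Type*} : ∀ {n : ℕ} (g : Fin n → α → ℝ≥0∞),
    ∑' f : Fin n → α, ∏ i, g i (f i) = ∏ i, ∑' a, g i a
  | 0, g => by simp
  | n + 1, g => by
    rw [← (Fin.consEquiv fun _ : Fin (n + 1) => α).tsum_eq, ENNReal.tsum_prod', Fin.prod_univ_succ]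
    simp only [Fin.consEquiv_apply, Fin.prod_univ_succ, Fin.cons_zero, Fin.cons_succ,
      ENNReal.tsum_mul_left, ENNReal.tsum_pi_prod (fun i => g i.succ), ENNReal.tsum_mul_right]

lemma tsum_pnat_ofReal_exp_neg_mul_sq_le {c : ℝ} (hc : 0 < c) :
    ∑' n : ℕ+, ENNReal.ofReal (Real.exp (-c * ((n : ℕ) : ℝ) ^ 2))
      ≤ ENNReal.ofReal (√(Real.pi / c) / 2) := by
  set g : ℝ → ℝ := fun x => Real.exp (-c * x ^ 2)
  have anti : AntitoneOn g (Set.Ici 0) := fun x hx y _ hxy => by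
    have := pow_le_pow_left₀ (Set.mem_Ici.mp hx) hxy 2
    simp only [g, Real.exp_le_exp]
    nlinarith
  have int : IntegrableOn g (Set.Ioi 0) := (integrable_exp_neg_mul_sq hc).integrableOn
  have nonneg : ∀ t ∈ Set.Ioi (0 : ℝ), 0 ≤ g t := fun t _ => (Real.exp_pos _).le
  have hsum : Summable fun n : ℕ+ => g n := summable_pnat_iff_summable_succ.mpr <|
    (summable_nat_add_iff 1).mpr (anti.summable_of_integrableOn_Ioi_zero int nonneg)
  rw [← ENNReal.ofReal_tsum_of_nonneg (fun n => (Real.exp_pos _).le) hsum]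
  refine ENNReal.ofReal_le_ofReal ?_
  rw [tsum_pnat_eq_tsum_succ (f := fun n : ℕ => g n), ← integral_gaussian_Ioi]
  exact_mod_cast anti.tsum_add_one_le_integral int nonneg

lemma enorm_omega2_le {w : ℂ} (hw : 0 < w.re) :
    ‖omega2 w‖ₑ ≤ ENNReal.ofReal (√(Real.pi / w.re) / 2) := by
  refine enorm_tsum_le_tsum_enorm.trans (le_of_eq_of_le (tsum_congr fun m => ?_)
    (tsum_pnat_ofReal_exp_neg_mul_sq_le hw))
  rw [← ofReal_norm, Complex.norm_exp, ← Complex.ofReal_natCast, ← Complex.ofReal_pow,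
    ← Complex.ofReal_neg, re_ofReal_mul]
  ring_nf

lemma Complex.one_div_re (z : ℂ) : (1 / z).re = z.re / ‖z‖ ^ 2 := by
  rw [one_div, Complex.inv_re, Complex.normSq_eq_norm_sq]

lemma sqrt_pi_div_pi_sq_mul_one_div_re {z : ℂ} (hz : 0 < z.re) :
    √(Real.pi / (Real.pi ^ 2 * (1 / z).re)) / 2 = ‖z‖ / (2 * √(Real.pi * z.re)) := by
  have hz0 : 0 < ‖z‖ := lt_of_lt_of_le hz (Complex.re_le_norm z)
  rw [Complex.one_div_re, show Real.pi / (Real.pi ^ 2 * (z.re / ‖z‖ ^ 2)) =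
    ‖z‖ ^ 2 / (Real.pi * z.re) by field_simp, Real.sqrt_div (sq_nonneg _), Real.sqrt_sq hz0.le]
  ring

lemma tsum_ofReal_mul_exp_mul_norm_omega2_pow_le {z : ℂ} (hz : 0 < z.re) {A : ℝ} (hA : 0 ≤ A)
    (m n : ℕ) :
    ∑' f : Fin n → ℕ+, ENNReal.ofReal (A *
        Real.exp (-Real.pi ^ 2 * (1 / z).re * ∑ i, ((f i : ℕ) : ℝ) ^ 2) *
        ‖omega2 ((Real.pi : ℂ) ^ 2 / z)‖ ^ m)
      ≤ ENNReal.ofReal (A * (‖z‖ / (2 * √(Real.pi * z.re))) ^ (m + n)) := by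
  have hc : 0 < Real.pi ^ 2 * (1 / z).re := by
    have hz0 : 0 < ‖z‖ := lt_of_lt_of_le hz (Complex.re_le_norm z)
    rw [Complex.one_div_re]
    positivity
  set c := Real.pi ^ 2 * (1 / z).re
  have hre : ((Real.pi : ℂ) ^ 2 / z).re = c := by
    rw [div_eq_mul_one_div, ← Complex.ofReal_pow, Complex.re_ofReal_mul]
  have hterm : ∀ f : Fin n → ℕ+, ENNReal.ofReal (A *
        Real.exp (-Real.pi ^ 2 * (1 / z).re * ∑ i, ((f i : ℕ) : ℝ) ^ 2) *
        ‖omega2 ((Real.pi : ℂ) ^ 2 / z)‖ ^ m)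
      = (ENNReal.ofReal A * ‖omega2 ((Real.pi : ℂ) ^ 2 / z)‖ₑ ^ m) *
        ∏ i, ENNReal.ofReal (Real.exp (-c * ((f i : ℕ) : ℝ) ^ 2)) := by
    intro f
    rw [neg_mul, ← neg_mul, Finset.mul_sum, Real.exp_sum, ENNReal.ofReal_mul (by positivity),
      ENNReal.ofReal_mul hA, ENNReal.ofReal_pow (norm_nonneg _), ofReal_norm,
      ENNReal.ofReal_prod_of_nonneg fun i _ => (Real.exp_pos _).le]
    ring
  have hθ := tsum_pnat_ofReal_exp_neg_mul_sq_le hc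
  rw [sqrt_pi_div_pi_sq_mul_one_div_re hz] at hθ
  have hω := enorm_omega2_le (hre ▸ hc)
  rw [hre, sqrt_pi_div_pi_sq_mul_one_div_re hz] at hω
  simp_rw [hterm]
  rw [ENNReal.tsum_mul_left,
    ENNReal.tsum_pi_prod fun _ (k : ℕ+) => ENNReal.ofReal (Real.exp (-c * ((k : ℕ) : ℝ) ^ 2)),
    Finset.prod_const, Finset.card_univ, Fintype.card_fin, ENNReal.ofReal_mul hA,
    ENNReal.ofReal_pow (by positivity), pow_add, mul_assoc]
  gcongr

lemma lintegral_ofReal_mul_norm_add_mul_I_rpow_lt_top {x : ℝ} (hx : 0 < x) {q : ℝ} (hq : q < -1)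
    (C : ℝ) : ∫⁻ y : ℝ, ENNReal.ofReal (C * ‖(x : ℂ) + y * I‖ ^ q) < ⊤ := by
  have hint : Integrable fun y : ℝ => |C| * (1 + x⁻¹) ^ (-q) * (1 + ‖y‖) ^ (-(-q)) :=
    (integrable_one_add_norm (by rw [Module.finrank_self, Nat.cast_one]; linarith)).const_mul _
  refine lt_of_le_of_lt (lintegral_mono fun y => ENNReal.ofReal_le_ofReal ?_) hint.lintegral_lt_top
  set z : ℂ := (x : ℂ) + y * I
  have hxz : x ≤ ‖z‖ := by simpa [z] using Complex.re_le_norm z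
  have hyz : |y| ≤ ‖z‖ := by simpa [z] using Complex.abs_im_le_norm z
  have hbracket : (1 + ‖y‖) / (1 + x⁻¹) ≤ ‖z‖ := by
    rw [div_le_iff₀ (by positivity), Real.norm_eq_abs, mul_add, mul_one, ← div_eq_mul_inv,
      add_comm]
    exact add_le_add hyz ((one_le_div hx).mpr hxz)
  calc C * ‖z‖ ^ q ≤ |C| * ((1 + ‖y‖) / (1 + x⁻¹)) ^ q :=
        mul_le_mul (le_abs_self C) (Real.rpow_le_rpow_of_nonpos (by positivity) hbracket
          (by linarith)) (by positivity) (abs_nonneg C)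
    _ = |C| * (1 + x⁻¹) ^ (-q) * (1 + ‖y‖) ^ (-(-q)) := by
        rw [Real.div_rpow (by positivity) (by positivity), Real.rpow_neg (by positivity), neg_neg]
        ring

theorem statement13_general (d h : ℕ) (r : Fin d → ℕ)
    (N : ℕ) (hN : 1 ≤ N)
    (η ℓ lam : ℕ) (hη : η ≤ h - 1) (hlam2 : lam ≤ h - η)
    (k : ℝ) (hk : -(∑ j, 1 / (r j : ℝ)) + ((h : ℝ) - η - ℓ) / 2 < k) :
    (∑' f : Fin lam → ℕ+,
      ∫⁻ y : ℝ, ENNReal.ofReal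
        (‖Complex.exp ((N : ℂ) * ((1 / (N : ℂ)) + y * Complex.I))‖ *
          ‖(1 / (N : ℂ)) + y * Complex.I‖ ^
            (-k - 1 - (∑ j, 1 / (r j : ℝ)) - ((h : ℝ) - η + ℓ) / 2) *
          Real.exp (-(Real.pi) ^ 2 * ((1 / ((1 / (N : ℂ)) + y * Complex.I)).re) *
            ∑ i, ((f i : ℕ) : ℝ) ^ 2) *
          ‖omega2 ((Real.pi : ℂ) ^ 2 / ((1 / (N : ℂ)) + y * Complex.I))‖ ^
            (h - η - lam))) < ⊤ := by
  set p := -k - 1 - (∑ j, 1 / (r j : ℝ)) - ((h : ℝ) - η + ℓ) / 2 with hp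
  set x : ℝ := (N : ℝ)⁻¹
  have hx : 0 < x := by positivity
  have hq : p + ((h - η - lam + lam : ℕ) : ℝ) < -1 := by
    rw [show h - η - lam + lam = h - η by omega, Nat.cast_sub (by omega), hp]
    linarith
  have hline : ∀ y : ℝ, 1 / (N : ℂ) + y * I = (x : ℂ) + y * I := by
    intro y; simp [x]
  simp_rw [hline]
  calc _ ≤ ∫⁻ y : ℝ, ∑' f : Fin lam → ℕ+, _ := tsum_lintegral_le_lintegral_tsum _
    _ ≤ ∫⁻ y : ℝ, ENNReal.ofReal (Real.exp 1 * (2 * √(Real.pi * x))⁻¹ ^ (h - η - lam + lam) *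
          ‖(x : ℂ) + y * I‖ ^ (p + (h - η - lam + lam : ℕ))) := lintegral_mono fun y => ?_
    _ < ⊤ := lintegral_ofReal_mul_norm_add_mul_I_rpow_lt_top hx hq _
  set z : ℂ := (x : ℂ) + y * I
  have hre : z.re = x := by simp [z]
  have hz : 0 < ‖z‖ := lt_of_lt_of_le (hre ▸ hx) (Complex.re_le_norm z)
  refine (tsum_ofReal_mul_exp_mul_norm_omega2_pow_le (hre ▸ hx) (by positivity) _ _).trans_eq ?_
  have hNz : ((N : ℂ) * z).re = 1 := by
    have : (N : ℝ) ≠ 0 := by positivity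
    simp [z, x, this]
  rw [Complex.norm_exp, hNz, hre, Real.rpow_add_natCast hz.ne', div_pow, inv_pow]
  congr 1
  ring

/-- For `0 ≤ η ≤ h-1`, `0 ≤ ℓ ≤ η`, `1 ≤ λ ≤ h-η` and
`k > -τ(r,𝔇) + (h-η-ℓ)/2`, the quantity
`I_{1,2,λ} = ∑_{f₁≥1}⋯∑_{f_λ≥1} ∫_{(1/N)} |e^{Nz}| |z|^{-k-1-τ(r,𝔇)-(h-η+ℓ)/2}
  e^{-π² Re(1/z)(f₁²+⋯+f_λ²)} |ω₂(π²/z)|^{h-η-λ} |dz|` is finite. -/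
theorem statement13 (d h : ℕ) (hd : 1 ≤ d) (hh : 1 ≤ h) (r : Fin d → ℕ)
    (hr : ∀ j, 1 ≤ r j) (N : ℕ) (hN : 1 ≤ N)
    (η ℓ lam : ℕ) (hη : η ≤ h - 1) (hℓ : ℓ ≤ η) (hlam1 : 1 ≤ lam) (hlam2 : lam ≤ h - η)
    (k : ℝ) (hk : -(∑ j, 1 / (r j : ℝ)) + ((h : ℝ) - η - ℓ) / 2 < k) :
    (∑' f : Fin lam → ℕ+,
      ∫⁻ y : ℝ, ENNReal.ofReal
        (‖Complex.exp ((N : ℂ) * ((1 / (N : ℂ)) + y * Complex.I))‖ *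
          ‖(1 / (N : ℂ)) + y * Complex.I‖ ^
            (-k - 1 - (∑ j, 1 / (r j : ℝ)) - ((h : ℝ) - η + ℓ) / 2) *
          Real.exp (-(Real.pi) ^ 2 * ((1 / ((1 / (N : ℂ)) + y * Complex.I)).re) *
            ∑ i, ((f i : ℕ) : ℝ) ^ 2) *
          ‖omega2 ((Real.pi : ℂ) ^ 2 / ((1 / (N : ℂ)) + y * Complex.I))‖ ^
            (h - η - lam))) < ⊤ :=
  statement13_general d h r N hN η ℓ lam hη hlam2 k hk
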